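/- Correctness of obfuscation slicing: if ρ, T ⟶obf p, S (forward obfuscation slicing of trace T with respect to input environment pattern ρ yields output pattern p and trace slice S) and γ, e ⇓ v, T (expression e evaluates in environment γ to v with trace T), then for every environment γ' with γ' ⊒ ρ and every v', T' such that γ', e ⇓ v', T', we have ρ, T' ⟶obf p, S (obfuscation slicing of the new trace yields the same output pattern p and slice S) and p ⊑ v' (the new result refines p). -/

import Mathlib

namespace Prov

abbrev Var := String
abbrev Loc := ℕ

/-- Expressions of the call-by-value core calculus. -/
inductive Expr : Type where
  | var : Var → Expr
  | const : ℕ → Expr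
  | prim : String → List Expr → Expr
  | pair : Expr → Expr → Expr
  | fst : Expr → Expr
  | snd : Expr → Expr
  | inl : Expr → Expr
  | inr : Expr → Expr
  | case : Expr → Var → Expr → Var → Expr → Expr
  | fn : Var → Var → Expr → Expr
  | app : Expr → Expr → Expr
  | roll : Expr → Expr
  | unroll : Expr → Expr
  | letin : Var → Expr → Expr → Expr

/-- Values; closures record a recursive function `fun f(x).e` and an environment. -/
inductive Val : Type where
  | const : ℕ → Val
  | pair : Val → Val → Val
  | inl : Val → Val
  | inr : Val → Val
  | roll : Val → Val
  | closure : Var → Var → Expr → (Var → Val) → Val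

abbrev Env := Var → Val

def upd {α : Type} (γ : Var → α) (x : Var) (v : α) : Var → α :=
  fun y => if y = x then v else γ y

/-- Traces (possibly containing holes, used for trace slices). -/
inductive Trace : Type where
  | hole : Trace
  | var : Var → Trace
  | const : ℕ → Trace
  | prim : String → List Trace → Trace
  | letT : Trace → Var → Trace → Trace
  | pair : Trace → Trace → Trace
  | fst : Trace → Trace
  | snd : Trace → Trace
  | inl : Trace → Trace
  | inr : Trace → Trace
  | caseL : Trace → Var → Expr → Var → Expr → Trace → Trace
  | caseR : Trace → Var → Expr → Var → Expr → Trace → Trace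
  | fn : Var → Var → Expr → Trace
  | app : Var → Var → Expr → Trace → Trace → Trace → Trace
  | roll : Trace → Trace
  | unroll : Trace → Trace

mutual
/-- Tracing evaluation judgment `γ, e ⇓ v, T`, parameterized by the semantic
interpretation `ps` of primitive operations (which return constants). -/
inductive Eval (ps : String → List Val → ℕ) : Env → Expr → Val → Trace → Prop where
  | var : Eval ps γ (.var x) (γ x) (.var x)
  | const : Eval ps γ (.const c) (.const c) (.const c)
  | prim : EvalList ps γ es vs Ts → Eval ps γ (.prim op es) (.const (ps op vs)) (.prim op Ts)
  | pair : Eval ps γ e1 v1 T1 → Eval ps γ e2 v2 T2 →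
      Eval ps γ (.pair e1 e2) (.pair v1 v2) (.pair T1 T2)
  | fst : Eval ps γ e (.pair v1 v2) T → Eval ps γ (.fst e) v1 (.fst T)
  | snd : Eval ps γ e (.pair v1 v2) T → Eval ps γ (.snd e) v2 (.snd T)
  | inl : Eval ps γ e v T → Eval ps γ (.inl e) (.inl v) (.inl T)
  | inr : Eval ps γ e v T → Eval ps γ (.inr e) (.inr v) (.inr T)
  | caseL : Eval ps γ e (.inl v) T → Eval ps (upd γ x1 v) e1 v1 T1 →
      Eval ps γ (.case e x1 e1 x2 e2) v1 (.caseL T x1 e1 x2 e2 T1)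
  | caseR : Eval ps γ e (.inr v) T → Eval ps (upd γ x2 v) e2 v2 T2 →
      Eval ps γ (.case e x1 e1 x2 e2) v2 (.caseR T x1 e1 x2 e2 T2)
  | fn : Eval ps γ (.fn f x e) (.closure f x e γ) (.fn f x e)
  | app : Eval ps γ e1 (.closure f x e γ0) T1 → Eval ps γ e2 v2 T2 →
      Eval ps (upd (upd γ0 x v2) f (.closure f x e γ0)) e v T →
      Eval ps γ (.app e1 e2) v (.app f x e T1 T2 T)
  | roll : Eval ps γ e v T → Eval ps γ (.roll e) (.roll v) (.roll T)
  | unroll : Eval ps γ e (.roll v) T → Eval ps γ (.unroll e) v (.unroll T)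
  | letin : Eval ps γ e1 v1 T1 → Eval ps (upd γ x v1) e2 v2 T2 →
      Eval ps γ (.letin x e1 e2) v2 (.letT T1 x T2)

inductive EvalList (ps : String → List Val → ℕ) : Env → List Expr → List Val → List Trace → Prop where
  | nil : EvalList ps γ [] [] []
  | cons : Eval ps γ e v T → EvalList ps γ es vs Ts →
      EvalList ps γ (e :: es) (v :: vs) (T :: Ts)
end

mutual
/-- Replay judgment `γ, T ↷ v`. -/
inductive Replay (ps : String → List Val → ℕ) : Env → Trace → Val → Prop where
  | var : Replay ps γ (.var x) (γ x)
  | const : Replay ps γ (.const c) (.const c)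
  | prim : ReplayList ps γ Ts vs → Replay ps γ (.prim op Ts) (.const (ps op vs))
  | pair : Replay ps γ T1 v1 → Replay ps γ T2 v2 → Replay ps γ (.pair T1 T2) (.pair v1 v2)
  | fst : Replay ps γ T (.pair v1 v2) → Replay ps γ (.fst T) v1
  | snd : Replay ps γ T (.pair v1 v2) → Replay ps γ (.snd T) v2
  | inl : Replay ps γ T v → Replay ps γ (.inl T) (.inl v)
  | inr : Replay ps γ T v → Replay ps γ (.inr T) (.inr v)
  | caseL : Replay ps γ T (.inl v) → Replay ps (upd γ x1 v) T1 v1 →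
      Replay ps γ (.caseL T x1 e1 x2 e2 T1) v1
  | caseR : Replay ps γ T (.inr v) → Replay ps (upd γ x2 v) T2 v2 →
      Replay ps γ (.caseR T x1 e1 x2 e2 T2) v2
  | fn : Replay ps γ (.fn f x e) (.closure f x e γ)
  | app : Replay ps γ T1 (.closure f x e γ0) → Replay ps γ T2 v2 →
      Replay ps (upd (upd γ0 x v2) f (.closure f x e γ0)) T v →
      Replay ps γ (.app f x e T1 T2 T) v
  | roll : Replay ps γ T v → Replay ps γ (.roll T) (.roll v)
  | unroll : Replay ps γ T (.roll v) → Replay ps γ (.unroll T) v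
  | letT : Replay ps γ T1 v1 → Replay ps (upd γ x v1) T2 v2 →
      Replay ps γ (.letT T1 x T2) v2

inductive ReplayList (ps : String → List Val → ℕ) : Env → List Trace → List Val → Prop where
  | nil : ReplayList ps γ [] []
  | cons : Replay ps γ T v → ReplayList ps γ Ts vs → ReplayList ps γ (T :: Ts) (v :: vs)
end

/-- Values annotated (on every constructor) with annotations from `A`. -/
inductive AVal (A : Type) : Type where
  | const : ℕ → A → AVal A
  | pair : AVal A → AVal A → A → AVal A
  | inl : AVal A → A → AVal A
  | inr : AVal A → A → AVal A
  | roll : AVal A → A → AVal A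
  | closure : Var → Var → Expr → (Var → AVal A) → A → AVal A

abbrev AEnv (A : Type) := Var → AVal A

/-- Erasure of annotations. -/
def erase {A : Type} : AVal A → Val
  | .const c _ => .const c
  | .pair v1 v2 _ => .pair (erase v1) (erase v2)
  | .inl v _ => .inl (erase v)
  | .inr v _ => .inr (erase v)
  | .roll v _ => .roll (erase v)
  | .closure f x e ρ _ => .closure f x e (fun y => erase (ρ y))

def eraseEnv {A : Type} (γ : AEnv A) : Env := fun x => erase (γ x)

/-- Top-level annotation of an annotated value. -/
def annOf {A : Type} : AVal A → A
  | .const _ a => a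
  | .pair _ _ a => a
  | .inl _ a => a
  | .inr _ a => a
  | .roll _ a => a
  | .closure _ _ _ _ a => a

/-- Patterns (partial values): the hole `□`, the wildcard `◇`, constants, pairs,
constructor patterns (`inl`, `inr`, `roll`) and closure patterns `⟨κ, ρ⟩` with an
environment of patterns. -/
inductive Pat : Type where
  | hole : Pat
  | wild : Pat
  | const : ℕ → Pat
  | pair : Pat → Pat → Pat
  | inl : Pat → Pat
  | inr : Pat → Pat
  | roll : Pat → Pat
  | closure : Var → Var → Expr → (Var → Pat) → Pat

/-- Environment patterns (pointwise patterns for environments). -/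
abbrev EnvPat := Var → Pat

/-- `p ⊑ v`: the value `v` refines the pattern `p` (`□` is below everything,
refinement is componentwise, pointwise on closure environments). -/
inductive PLe : Pat → Val → Prop where
  | hole : PLe .hole v
  | const : PLe (.const c) (.const c)
  | pair : PLe p1 v1 → PLe p2 v2 → PLe (.pair p1 p2) (.pair v1 v2)
  | inl : PLe p v → PLe (.inl p) (.inl v)
  | inr : PLe p v → PLe (.inr p) (.inr v)
  | roll : PLe p v → PLe (.roll p) (.roll v)
  | closure : (∀ y, PLe (ρ y) (γ y)) → PLe (.closure f x e ρ) (.closure f x e γ)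

mutual
/-- The forward obfuscation slicing judgment `ρ, T ⟶obf p, S`: from an input
environment pattern `ρ`, compute the output pattern `p` (how much of the output is
determined by `ρ`) and a trace slice `S`.  Whenever an intermediate result needed
by replay is a hole `□` (a primitive argument, a projected pair, a case scrutinee,
an unrolled value, or an applied function), the output pattern is `□` and the
slice is a hole. -/
inductive ObfSlice (ps : String → List Val → ℕ) :
    EnvPat → Trace → Pat → Trace → Prop where
  | var : ObfSlice ps ρ (.var x) (ρ x) (.var x)
  | const : ObfSlice ps ρ (.const c) (.const c) (.const c)
  | prim : ObfSliceList ps ρ Ts cs Ss →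
      ObfSlice ps ρ (.prim op Ts) (.const (ps op (cs.map Val.const))) (.prim op Ss)
  | primHole : T ∈ Ts → ObfSlice ps ρ T .hole S →
      ObfSlice ps ρ (.prim op Ts) .hole .hole
  | letT : ObfSlice ps ρ T1 p1 S1 → ObfSlice ps (upd ρ x p1) T2 p2 S2 →
      ObfSlice ps ρ (.letT T1 x T2) p2 (.letT S1 x S2)
  | pair : ObfSlice ps ρ T1 p1 S1 → ObfSlice ps ρ T2 p2 S2 →
      ObfSlice ps ρ (.pair T1 T2) (.pair p1 p2) (.pair S1 S2)
  | fst : ObfSlice ps ρ T (.pair p1 p2) S → ObfSlice ps ρ (.fst T) p1 (.fst S)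
  | fstHole : ObfSlice ps ρ T .hole S → ObfSlice ps ρ (.fst T) .hole .hole
  | snd : ObfSlice ps ρ T (.pair p1 p2) S → ObfSlice ps ρ (.snd T) p2 (.snd S)
  | sndHole : ObfSlice ps ρ T .hole S → ObfSlice ps ρ (.snd T) .hole .hole
  | inl : ObfSlice ps ρ T p S → ObfSlice ps ρ (.inl T) (.inl p) (.inl S)
  | inr : ObfSlice ps ρ T p S → ObfSlice ps ρ (.inr T) (.inr p) (.inr S)
  | caseL : ObfSlice ps ρ T (.inl p) S → ObfSlice ps (upd ρ x1 p) T1 p1 S1 →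
      ObfSlice ps ρ (.caseL T x1 e1 x2 e2 T1) p1 (.caseL S x1 e1 x2 e2 S1)
  | caseLHole : ObfSlice ps ρ T .hole S →
      ObfSlice ps ρ (.caseL T x1 e1 x2 e2 T1) .hole .hole
  | caseR : ObfSlice ps ρ T (.inr p) S → ObfSlice ps (upd ρ x2 p) T2 p2 S2 →
      ObfSlice ps ρ (.caseR T x1 e1 x2 e2 T2) p2 (.caseR S x1 e1 x2 e2 S2)
  | caseRHole : ObfSlice ps ρ T .hole S →
      ObfSlice ps ρ (.caseR T x1 e1 x2 e2 T2) .hole .hole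
  | fn : ObfSlice ps ρ (.fn f x e) (.closure f x e ρ) (.fn f x e)
  | app : ObfSlice ps ρ T1 (.closure f x e ρ0) S1 → ObfSlice ps ρ T2 p2 S2 →
      ObfSlice ps (upd (upd ρ0 x p2) f (.closure f x e ρ0)) T p S →
      ObfSlice ps ρ (.app f x e T1 T2 T) p (.app f x e S1 S2 S)
  | appHole : ObfSlice ps ρ T1 .hole S1 →
      ObfSlice ps ρ (.app f x e T1 T2 T) .hole .hole
  | roll : ObfSlice ps ρ T p S → ObfSlice ps ρ (.roll T) (.roll p) (.roll S)
  | unroll : ObfSlice ps ρ T (.roll p) S → ObfSlice ps ρ (.unroll T) p (.unroll S)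
  | unrollHole : ObfSlice ps ρ T .hole S → ObfSlice ps ρ (.unroll T) .hole .hole

/-- Obfuscation slicing of the arguments of a primitive operation: every argument
trace must produce a constant pattern. -/
inductive ObfSliceList (ps : String → List Val → ℕ) :
    EnvPat → List Trace → List ℕ → List Trace → Prop where
  | nil : ObfSliceList ps ρ [] [] []
  | cons : ObfSlice ps ρ T (.const c) S → ObfSliceList ps ρ Ts cs Ss →
      ObfSliceList ps ρ (T :: Ts) (c :: cs) (S :: Ss)
end


/- Induct on the slicing derivation, generalising over the expression and both evaluations.
A trace records the expression's control flow, so inverting the first evaluation fixes the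
shape of `e`, and the second trace has the same shape except possibly at case splits. Where
slicing consumes a non-hole pattern (a scrutinee, a projected pair, an applied closure), that
pattern is refined by the new intermediate value, which therefore takes the same branch and
feeds a refining environment to the continuation; where it consumes `□`, the slice is a hole
whichever way the new run goes. -/

abbrev PLeEnv (ρ : EnvPat) (γ : Env) : Prop := ∀ x, PLe (ρ x) (γ x)

theorem PLeEnv.upd {ρ : EnvPat} {γ : Env} (h : PLeEnv ρ γ) {x : Var} {p : Pat} {v : Val}
    (hp : PLe p v) : PLeEnv (upd ρ x p) (upd γ x v) := by
  intro y
  unfold Prov.upd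
  split
  · exact hp
  · exact h y

theorem EvalList.exists_mem_of_mem {ps : String → List Val → ℕ} {γ γ' : Env} {es : List Expr}
    {vs vs' : List Val} {Ts Ts' : List Trace} {T : Trace}
    (h : EvalList ps γ es vs Ts) (h' : EvalList ps γ' es vs' Ts') (hT : T ∈ Ts) :
    ∃ e v v' T', T' ∈ Ts' ∧ Eval ps γ e v T ∧ Eval ps γ' e v' T' := by
  induction es generalizing vs Ts vs' Ts' with
  | nil => cases h; simp at hT
  | cons e es ih =>
    cases h with | cons he hes =>
    cases h' with | cons he' hes' =>
    rcases List.mem_cons.mp hT with rfl | hT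
    · exact ⟨e, _, _, _, List.mem_cons_self, he, he'⟩
    · obtain ⟨e, v, v', T', hT', hev, hev'⟩ := ih hes hes' hT
      exact ⟨e, v, v', T', List.mem_cons_of_mem _ hT', hev, hev'⟩

def ObfSliceStable (ps : String → List Val → ℕ) (ρ : EnvPat) (T : Trace) (p : Pat)
    (S : Trace) : Prop :=
  ∀ ⦃γ e v⦄, Eval ps γ e v T → ∀ ⦃γ'⦄, PLeEnv ρ γ' → ∀ ⦃v' T'⦄, Eval ps γ' e v' T' →
    ObfSlice ps ρ T' p S ∧ PLe p v'

def ObfSliceListStable (ps : String → List Val → ℕ) (ρ : EnvPat) (Ts : List Trace)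
    (cs : List ℕ) (Ss : List Trace) : Prop :=
  ∀ ⦃γ es vs⦄, EvalList ps γ es vs Ts → ∀ ⦃γ'⦄, PLeEnv ρ γ' → ∀ ⦃vs' Ts'⦄,
    EvalList ps γ' es vs' Ts' → ObfSliceList ps ρ Ts' cs Ss ∧ vs' = cs.map Val.const

section Compatibility

variable {ps : String → List Val → ℕ} {ρ ρ0 : EnvPat} {T T1 T2 S S1 S2 : Trace}
  {Ts Ss : List Trace} {p p1 p2 : Pat} {cs : List ℕ} {c : ℕ} {op : String}
  {x x1 x2 f : Var} {e e1 e2 : Expr}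

namespace ObfSliceStable

theorem var : ObfSliceStable ps ρ (.var x) (ρ x) (.var x) := by
  rintro _ _ _ ⟨⟩ _ hγ' _ _ ⟨⟩
  exact ⟨.var, hγ' x⟩

theorem const : ObfSliceStable ps ρ (.const c) (.const c) (.const c) := by
  rintro _ _ _ ⟨⟩ _ _ _ _ ⟨⟩
  exact ⟨.const, .const⟩

theorem prim (h : ObfSliceListStable ps ρ Ts cs Ss) :
    ObfSliceStable ps ρ (.prim op Ts) (.const (ps op (cs.map Val.const))) (.prim op Ss) := by
  intro _ _ _ he _ hγ' _ _ he'
  cases he with | prim hl =>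
  cases he' with | prim hl' =>
  obtain ⟨o, rfl⟩ := h hl hγ' hl'
  exact ⟨.prim o, .const⟩

theorem primHole (hT : T ∈ Ts) (h : ObfSliceStable ps ρ T .hole S) :
    ObfSliceStable ps ρ (.prim op Ts) .hole .hole := by
  intro _ _ _ he _ hγ' _ _ he'
  cases he with | prim hl =>
  cases he' with | prim hl' =>
  obtain ⟨_, _, _, T'', hT'', ha, ha'⟩ := hl.exists_mem_of_mem hl' hT
  exact ⟨.primHole hT'' (h ha hγ' ha').1, .hole⟩

theorem letT (h1 : ObfSliceStable ps ρ T1 p1 S1) (h2 : ObfSliceStable ps (upd ρ x p1) T2 p2 S2) :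
    ObfSliceStable ps ρ (.letT T1 x T2) p2 (.letT S1 x S2) := by
  intro _ _ _ he _ hγ' _ _ he'
  cases he with | letin ha hb =>
  cases he' with | letin ha' hb' =>
  obtain ⟨o1, hp1⟩ := h1 ha hγ' ha'
  obtain ⟨o2, hp2⟩ := h2 hb (hγ'.upd hp1) hb'
  exact ⟨.letT o1 o2, hp2⟩

theorem pair (h1 : ObfSliceStable ps ρ T1 p1 S1) (h2 : ObfSliceStable ps ρ T2 p2 S2) :
    ObfSliceStable ps ρ (.pair T1 T2) (.pair p1 p2) (.pair S1 S2) := by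
  intro _ _ _ he _ hγ' _ _ he'
  cases he with | pair ha hb =>
  cases he' with | pair ha' hb' =>
  obtain ⟨o1, hp1⟩ := h1 ha hγ' ha'
  obtain ⟨o2, hp2⟩ := h2 hb hγ' hb'
  exact ⟨.pair o1 o2, .pair hp1 hp2⟩

theorem fst (h : ObfSliceStable ps ρ T (.pair p1 p2) S) :
    ObfSliceStable ps ρ (.fst T) p1 (.fst S) := by
  intro _ _ _ he _ hγ' _ _ he'
  cases he with | fst ha =>
  cases he' with | fst ha' =>
  obtain ⟨o, hp⟩ := h ha hγ' ha'
  cases hp with | pair hp1 _ =>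
  exact ⟨.fst o, hp1⟩

theorem fstHole (h : ObfSliceStable ps ρ T .hole S) :
    ObfSliceStable ps ρ (.fst T) .hole .hole := by
  intro _ _ _ he _ hγ' _ _ he'
  cases he with | fst ha =>
  cases he' with | fst ha' =>
  exact ⟨.fstHole (h ha hγ' ha').1, .hole⟩

theorem snd (h : ObfSliceStable ps ρ T (.pair p1 p2) S) :
    ObfSliceStable ps ρ (.snd T) p2 (.snd S) := by
  intro _ _ _ he _ hγ' _ _ he'
  cases he with | snd ha =>
  cases he' with | snd ha' =>
  obtain ⟨o, hp⟩ := h ha hγ' ha'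
  cases hp with | pair _ hp2 =>
  exact ⟨.snd o, hp2⟩

theorem sndHole (h : ObfSliceStable ps ρ T .hole S) :
    ObfSliceStable ps ρ (.snd T) .hole .hole := by
  intro _ _ _ he _ hγ' _ _ he'
  cases he with | snd ha =>
  cases he' with | snd ha' =>
  exact ⟨.sndHole (h ha hγ' ha').1, .hole⟩

theorem inl (h : ObfSliceStable ps ρ T p S) : ObfSliceStable ps ρ (.inl T) (.inl p) (.inl S) := by
  intro _ _ _ he _ hγ' _ _ he'
  cases he with | inl ha =>
  cases he' with | inl ha' =>
  obtain ⟨o, hp⟩ := h ha hγ' ha'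
  exact ⟨.inl o, .inl hp⟩

theorem inr (h : ObfSliceStable ps ρ T p S) : ObfSliceStable ps ρ (.inr T) (.inr p) (.inr S) := by
  intro _ _ _ he _ hγ' _ _ he'
  cases he with | inr ha =>
  cases he' with | inr ha' =>
  obtain ⟨o, hp⟩ := h ha hγ' ha'
  exact ⟨.inr o, .inr hp⟩

theorem caseL (h : ObfSliceStable ps ρ T (.inl p) S)
    (h1 : ObfSliceStable ps (upd ρ x1 p) T1 p1 S1) :
    ObfSliceStable ps ρ (.caseL T x1 e1 x2 e2 T1) p1 (.caseL S x1 e1 x2 e2 S1) := by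
  intro _ _ _ he _ hγ' _ _ he'
  cases he with | caseL ha hb =>
  cases he' with
  | caseL ha' hb' =>
    obtain ⟨o, hp⟩ := h ha hγ' ha'
    cases hp with | inl hp =>
    obtain ⟨o1, hp1⟩ := h1 hb (hγ'.upd hp) hb'
    exact ⟨.caseL o o1, hp1⟩
  | caseR ha' _ => nomatch (h ha hγ' ha').2

theorem caseR (h : ObfSliceStable ps ρ T (.inr p) S)
    (h2 : ObfSliceStable ps (upd ρ x2 p) T2 p2 S2) :
    ObfSliceStable ps ρ (.caseR T x1 e1 x2 e2 T2) p2 (.caseR S x1 e1 x2 e2 S2) := by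
  intro _ _ _ he _ hγ' _ _ he'
  cases he with | caseR ha hb =>
  cases he' with
  | caseL ha' _ => nomatch (h ha hγ' ha').2
  | caseR ha' hb' =>
    obtain ⟨o, hp⟩ := h ha hγ' ha'
    cases hp with | inr hp =>
    obtain ⟨o2, hp2⟩ := h2 hb (hγ'.upd hp) hb'
    exact ⟨.caseR o o2, hp2⟩

theorem caseLHole (h : ObfSliceStable ps ρ T .hole S) :
    ObfSliceStable ps ρ (.caseL T x1 e1 x2 e2 T1) .hole .hole := by
  intro _ _ _ he _ hγ' _ _ he'
  cases he with | caseL ha _ =>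
  cases he' with
  | caseL ha' _ => exact ⟨.caseLHole (h ha hγ' ha').1, .hole⟩
  | caseR ha' _ => exact ⟨.caseRHole (h ha hγ' ha').1, .hole⟩

theorem caseRHole (h : ObfSliceStable ps ρ T .hole S) :
    ObfSliceStable ps ρ (.caseR T x1 e1 x2 e2 T2) .hole .hole := by
  intro _ _ _ he _ hγ' _ _ he'
  cases he with | caseR ha _ =>
  cases he' with
  | caseL ha' _ => exact ⟨.caseLHole (h ha hγ' ha').1, .hole⟩
  | caseR ha' _ => exact ⟨.caseRHole (h ha hγ' ha').1, .hole⟩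

theorem fn : ObfSliceStable ps ρ (.fn f x e) (.closure f x e ρ) (.fn f x e) := by
  rintro _ _ _ ⟨⟩ _ hγ' _ _ ⟨⟩
  exact ⟨.fn, .closure hγ'⟩

theorem app {T3 S3 : Trace} {p3 : Pat} (h1 : ObfSliceStable ps ρ T1 (.closure f x e ρ0) S1)
    (h2 : ObfSliceStable ps ρ T2 p2 S2)
    (h3 : ObfSliceStable ps (upd (upd ρ0 x p2) f (.closure f x e ρ0)) T3 p3 S3) :
    ObfSliceStable ps ρ (.app f x e T1 T2 T3) p3 (.app f x e S1 S2 S3) := by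
  intro _ _ _ he _ hγ' _ _ he'
  cases he with | app ha hb hc =>
  cases he' with | app ha' hb' hc' =>
  obtain ⟨o1, hp1⟩ := h1 ha hγ' ha'
  cases hp1 with | closure hγ0 =>
  obtain ⟨o2, hp2⟩ := h2 hb hγ' hb'
  obtain ⟨o3, hp3⟩ := h3 hc ((PLeEnv.upd hγ0 hp2).upd (.closure hγ0)) hc'
  exact ⟨.app o1 o2 o3, hp3⟩

theorem appHole {T3 : Trace} (h : ObfSliceStable ps ρ T1 .hole S1) :
    ObfSliceStable ps ρ (.app f x e T1 T2 T3) .hole .hole := by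
  intro _ _ _ he _ hγ' _ _ he'
  cases he with | app ha _ _ =>
  cases he' with | app ha' _ _ =>
  exact ⟨.appHole (h ha hγ' ha').1, .hole⟩

theorem roll (h : ObfSliceStable ps ρ T p S) :
    ObfSliceStable ps ρ (.roll T) (.roll p) (.roll S) := by
  intro _ _ _ he _ hγ' _ _ he'
  cases he with | roll ha =>
  cases he' with | roll ha' =>
  obtain ⟨o, hp⟩ := h ha hγ' ha'
  exact ⟨.roll o, .roll hp⟩

theorem unroll (h : ObfSliceStable ps ρ T (.roll p) S) :
    ObfSliceStable ps ρ (.unroll T) p (.unroll S) := by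
  intro _ _ _ he _ hγ' _ _ he'
  cases he with | unroll ha =>
  cases he' with | unroll ha' =>
  obtain ⟨o, hp⟩ := h ha hγ' ha'
  cases hp with | roll hp =>
  exact ⟨.unroll o, hp⟩

theorem unrollHole (h : ObfSliceStable ps ρ T .hole S) :
    ObfSliceStable ps ρ (.unroll T) .hole .hole := by
  intro _ _ _ he _ hγ' _ _ he'
  cases he with | unroll ha =>
  cases he' with | unroll ha' =>
  exact ⟨.unrollHole (h ha hγ' ha').1, .hole⟩

end ObfSliceStable

theorem ObfSliceListStable.nil : ObfSliceListStable ps ρ [] [] [] := by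
  rintro _ _ _ ⟨⟩ _ _ _ _ ⟨⟩
  exact ⟨.nil, rfl⟩

theorem ObfSliceListStable.cons (h : ObfSliceStable ps ρ T (.const c) S)
    (hs : ObfSliceListStable ps ρ Ts cs Ss) :
    ObfSliceListStable ps ρ (T :: Ts) (c :: cs) (S :: Ss) := by
  intro _ _ _ hl _ hγ' _ _ hl'
  cases hl with | cons ha has =>
  cases hl' with | cons ha' has' =>
  obtain ⟨o, hp⟩ := h ha hγ' ha'
  obtain ⟨os, rfl⟩ := hs has hγ' has'
  cases hp
  exact ⟨.cons o os, rfl⟩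

end Compatibility

theorem ObfSlice.stable {ps : String → List Val → ℕ} {ρ : EnvPat} {T S : Trace} {p : Pat}
    (h : ObfSlice ps ρ T p S) : ObfSliceStable ps ρ T p S := by
  induction h using ObfSlice.rec
    (motive_2 := fun ρ Ts cs Ss _ => ObfSliceListStable ps ρ Ts cs Ss) with
  | var => exact .var
  | const => exact .const
  | prim _ ih => exact .prim ih
  | primHole hT _ ih => exact .primHole hT ih
  | letT _ _ ih1 ih2 => exact .letT ih1 ih2
  | pair _ _ ih1 ih2 => exact .pair ih1 ih2
  | fst _ ih => exact .fst ih
  | fstHole _ ih => exact .fstHole ih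
  | snd _ ih => exact .snd ih
  | sndHole _ ih => exact .sndHole ih
  | inl _ ih => exact .inl ih
  | inr _ ih => exact .inr ih
  | caseL _ _ ih ih1 => exact .caseL ih ih1
  | caseLHole _ ih => exact .caseLHole ih
  | caseR _ _ ih ih2 => exact .caseR ih ih2
  | caseRHole _ ih => exact .caseRHole ih
  | fn => exact .fn
  | app _ _ _ ih1 ih2 ih3 => exact .app ih1 ih2 ih3
  | appHole _ ih => exact .appHole ih
  | roll _ ih => exact .roll ih
  | unroll _ ih => exact .unroll ih
  | unrollHole _ ih => exact .unrollHole ih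
  | nil => exact .nil
  | cons _ _ ih ihs => exact .cons ih ihs

/-- **Correctness of obfuscation slicing** (Lemma `obfuscation-slicing-correctness`):
if `ρ, T ⟶obf p, S` and `γ, e ⇓ v, T`, then for every `γ' ⊒ ρ` and every `v', T'`
with `γ', e ⇓ v', T'`, we have `ρ, T' ⟶obf p, S` and `p ⊑ v'`. -/
theorem obfuscation_slicing_correct
    (ps : String → List Val → ℕ) (ρ : EnvPat) (T S T' : Trace) (p : Pat)
    (γ γ' : Env) (e : Expr) (v v' : Val)
    (hobf : ObfSlice ps ρ T p S)
    (heval : Eval ps γ e v T)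
    (href : ∀ x, PLe (ρ x) (γ' x))
    (heval' : Eval ps γ' e v' T') :
    ObfSlice ps ρ T' p S ∧ PLe p v' :=
  hobf.stable heval href heval'

end Prov
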